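/- Let Σ = (a₁,…,a_k) be a finite alphabet and f : Σ → ℤ a function with f(a) ≥ −1 for all a ∈ Σ. Let n₁,…,n_k be natural numbers with n = n₁+⋯+n_k ≥ 1 such that Σ_{i=1}^{k} nᵢ·f(aᵢ) = −1. Then the number of f-Lukasiewicz words of length n containing exactly nᵢ occurrences of aᵢ for every i equals (n−1)!/(n₁!·n₂!·⋯·n_k!). -/

import Mathlib

/-!
Cycle lemma: if integers `g 0, …, g (n-1)` sum to `-1`, exactly one of their `n` cyclic
rotations has all proper prefix sums nonnegative, namely the one starting at the leftmost
minimum of the partial sums `s m = g 0 + ⋯ + g (m-1)`, `0 ≤ m < n`; this works because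
`s (m + n) = s m - 1`.  Hence `(v, r) ↦ v (· - r)` is a bijection from (Lukasiewicz word,
rotation) pairs onto the words with the prescribed letter counts, of which there are
`n! / ∏ nᵢ!` by the orbit-stabilizer theorem for `Perm (Fin n)` acting by precomposition.
Dividing by `n` gives `(n-1)! / ∏ nᵢ!`.
-/

open Finset Equiv MulAction

theorem existsUnique_lt_and_forall_le_add {s : ℕ → ℤ} {n : ℕ} (hn : 0 < n)
    (hs : ∀ m, s (m + n) = s m - 1) :
    ∃! r, r < n ∧ ∀ m, 1 ≤ m → m < n → s r ≤ s (r + m) := by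
  have s_lt_of_lt {r u} (hrn : r < n) (hr : ∀ m, 1 ≤ m → m < n → s r ≤ s (r + m)) (hu : u < r) :
      s r < s u := by
    have := hr (n + u - r) (by omega) (by omega)
    rw [show r + (n + u - r) = u + n by omega, hs] at this
    omega
  have hmin : ∃ u, u < n ∧ ∀ v < n, s u ≤ s v := by
    obtain ⟨u, hu, hmin⟩ := exists_min_image (range n) s ⟨0, mem_range.mpr hn⟩
    exact ⟨u, mem_range.mp hu, fun v hv => hmin v (mem_range.mpr hv)⟩
  refine existsUnique_of_exists_of_unique ⟨Nat.find hmin, (Nat.find_spec hmin).1, ?_⟩ ?_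
  · intro m hm hmn
    obtain ⟨hlt, hle⟩ := Nat.find_spec hmin
    rcases lt_or_ge (Nat.find hmin + m) n with h | h
    · exact hle _ h
    · rw [show Nat.find hmin + m = (Nat.find hmin + m - n) + n by omega, hs]
      by_contra! hs'
      have := Nat.find_min' hmin (m := Nat.find hmin + m - n)
        ⟨by omega, fun v hv => by linarith [hle v hv]⟩
      omega
  · have not_lt_of_good {r r'} (hr : ∀ m, 1 ≤ m → m < n → s r ≤ s (r + m)) (hr'n : r' < n)
        (hr' : ∀ m, 1 ≤ m → m < n → s r' ≤ s (r' + m)) : ¬ r < r' := fun hlt => by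
      have := hr (r' - r) (by omega) (by omega)
      rw [Nat.add_sub_cancel' hlt.le] at this
      exact (s_lt_of_lt hr'n hr' hlt).not_ge this
    rintro r r' ⟨hrn, hr⟩ ⟨hr'n, hr'⟩
    exact le_antisymm (Nat.le_of_not_lt (not_lt_of_good hr' hrn hr))
      (Nat.le_of_not_lt (not_lt_of_good hr hr'n hr'))

section Lukasiewicz

open Fin.NatCast

theorem sum_range_add_eq_add_sum_univ {M : Type*} [AddCommMonoid M] {n : ℕ} [NeZero n]
    (g : Fin n → M) (m : ℕ) :
    ∑ t ∈ range (m + n), g t = ∑ t ∈ range m, g t + ∑ j, g j := by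
  rw [sum_range_add, ← Fin.sum_univ_eq_sum_range (fun t => g ((m + t : ℕ) : Fin n))]
  congr 1
  simpa using Equiv.sum_comp (Equiv.addLeft (m : Fin n)) g

theorem sum_range_add_sum_filter_val_lt {M : Type*} [AddCommMonoid M] {n : ℕ} [NeZero n]
    (g : Fin n → M) (r : Fin n) {m : ℕ} (hm : m ≤ n) :
    ∑ t ∈ range r, g t + ∑ j ∈ univ.filter (fun j : Fin n => (j : ℕ) < m), g (j + r) =
      ∑ t ∈ range (r + m), g t := by
  have : (univ.filter (fun j : Fin n => (j : ℕ) < m)).map Fin.valEmbedding = range m := by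
    ext t
    simp only [mem_map, mem_filter, mem_univ, true_and, Fin.valEmbedding_apply, mem_range]
    exact ⟨fun ⟨j, hj, hjt⟩ => hjt ▸ hj, fun ht => ⟨⟨t, by omega⟩, ht, rfl⟩⟩
  rw [sum_range_add, ← this, sum_map]
  congr 1
  refine sum_congr rfl fun j _ => ?_
  simp [add_comm]

def IsLukasiewicz {n : ℕ} (g : Fin n → ℤ) : Prop :=
  ∑ j, g j = -1 ∧
    ∀ m : ℕ, 1 ≤ m → m < n → 0 ≤ ∑ j ∈ univ.filter (fun j : Fin n => (j : ℕ) < m), g j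

theorem existsUnique_isLukasiewicz_rotate {n : ℕ} {g : Fin n → ℤ} (hg : ∑ j, g j = -1) :
    ∃! r : Fin n, IsLukasiewicz fun j => g (j + r) := by
  have hn : n ≠ 0 := by rintro rfl; simp at hg
  have : NeZero n := ⟨hn⟩
  set s : ℕ → ℤ := fun m => ∑ t ∈ range m, g t
  have hs (m : ℕ) : s (m + n) = s m - 1 := by
    simp only [s, sum_range_add_eq_add_sum_univ, hg]; ring
  have hrot (r : Fin n) :
      IsLukasiewicz (fun j => g (j + r)) ↔ ∀ m, 1 ≤ m → m < n → s r ≤ s (r + m) := by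
    have hsum : ∑ j, g (j + r) = -1 := (Equiv.sum_comp (Equiv.addRight r) g).trans hg
    simp only [IsLukasiewicz, hsum, true_and]
    refine forall₃_congr fun m _ hm => ?_
    simp only [s, ← sum_range_add_sum_filter_val_lt g r hm.le, le_add_iff_nonneg_right]
  obtain ⟨r, ⟨hrn, hr⟩, huniq⟩ := existsUnique_lt_and_forall_le_add (Nat.pos_of_ne_zero hn) hs
  exact ⟨⟨r, hrn⟩, (hrot _).mpr hr, fun r' hr' => Fin.ext (huniq r' ⟨r'.isLt, (hrot r').mp hr'⟩)⟩

theorem card_isLukasiewicz_mul_eq_card {α : Type*} {n : ℕ} [NeZero n] (f : α → ℤ)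
    (P : (Fin n → α) → Prop) (hP : ∀ w (r : Fin n), P w → P fun j => w (j + r))
    (hsum : ∀ w, P w → ∑ j, f (w j) = -1) :
    Nat.card {w // P w ∧ IsLukasiewicz fun j => f (w j)} * n = Nat.card {w // P w} := by
  let rotate (p : {w // P w ∧ IsLukasiewicz fun j => f (w j)} × Fin n) : {w // P w} :=
    ⟨fun j => p.1.1 (j - p.2), by simpa [sub_eq_add_neg] using hP _ (-p.2) p.1.2.1⟩
  have hinj : Function.Injective rotate := by
    rintro ⟨⟨v, hvP, hv⟩, r⟩ ⟨⟨v', hv'P, hv'⟩, r'⟩ h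
    have hvv' (j : Fin n) : v (j - r) = v' (j - r') := congrFun (congrArg Subtype.val h) j
    obtain ⟨r₀, -, huniq⟩ :=
      existsUnique_isLukasiewicz_rotate (hsum _ (rotate (⟨v, hvP, hv⟩, r)).2)
    obtain rfl : r = r' := (huniq r (by simpa [rotate] using hv)).trans
      (huniq r' (by simpa [rotate, hvv'] using hv')).symm
    obtain rfl : v = v' := funext fun j => by simpa using hvv' (j + r)
    rfl
  have hsurj : Function.Surjective rotate := by
    rintro ⟨w, hw⟩
    obtain ⟨r, hr, -⟩ := existsUnique_isLukasiewicz_rotate (hsum w hw)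
    exact ⟨(⟨fun j => w (j + r), hP w r hw, hr⟩, r), by simp [rotate]⟩
  rw [← Nat.card_congr (Equiv.ofBijective rotate ⟨hinj, hsurj⟩), Nat.card_prod,
    Nat.card_eq_fintype_card (α := Fin n), Fintype.card_fin]

end Lukasiewicz

theorem DomMulAct.mem_orbit_perm_iff_card_fiber_eq {ι α : Type*} [Finite ι] {w w' : ι → α} :
    w' ∈ orbit (Perm ι)ᵈᵐᵃ w ↔ ∀ x, Nat.card {j // w' j = x} = Nat.card {j // w j = x} := by
  rw [mem_orbit_iff]
  constructor
  · rintro ⟨σ, rfl⟩ x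
    exact Nat.card_congr ((mk.symm σ).subtypeEquiv fun _ => Iff.rfl)
  · intro h
    let e x := (Finite.card_eq.mp (h x)).some
    exact ⟨mk (ofFiberEquiv e), funext (ofFiberEquiv_map e)⟩

theorem exists_card_fiber_eq {α : Type*} [Fintype α] (c : α → ℕ) {n : ℕ} (hc : ∑ x, c x = n) :
    ∃ w : Fin n → α, ∀ x, Nat.card {j // w j = x} = c x := by
  let E : Fin n ≃ Σ x, Fin (c x) := Fintype.equivOfCardEq (by simp [hc])
  refine ⟨fun j => (E j).1, fun x => ?_⟩
  rw [Nat.card_congr (E.subtypeEquiv (q := fun p => p.1 = x) fun _ => Iff.rfl),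
    Nat.card_congr (sigmaSubtype x), Nat.card_eq_fintype_card, Fintype.card_fin]

theorem card_words_with_counts_mul_prod_factorial {α : Type*} [Fintype α] (c : α → ℕ) {n : ℕ}
    (hc : ∑ x, c x = n) :
    Nat.card {w : Fin n → α // ∀ x, Nat.card {j // w j = x} = c x} * ∏ x, (c x).factorial =
      n.factorial := by
  classical
  obtain ⟨w₀, hw₀⟩ := exists_card_fiber_eq c hc
  have horbit : {w : Fin n → α | ∀ x, Nat.card {j // w j = x} = c x} =
      orbit (Perm (Fin n))ᵈᵐᵃ w₀ := by
    ext w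
    simp only [Set.mem_ofPred_eq, DomMulAct.mem_orbit_perm_iff_card_fiber_eq, hw₀]
  have hstab : Nat.card (stabilizer (Perm (Fin n))ᵈᵐᵃ w₀) = ∏ x, (c x).factorial := by
    rw [Nat.card_congr (DomMulAct.mk.symm.subtypeEquiv
      (p := (· ∈ stabilizer (Perm (Fin n))ᵈᵐᵃ w₀)) (q := fun σ : Perm (Fin n) => w₀ ∘ σ = w₀)
      fun _ => DomMulAct.mem_stabilizer_iff),
      Nat.card_eq_fintype_card, DomMulAct.stabilizer_card]
    simp_rw [← Nat.card_eq_fintype_card, hw₀]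
  calc _ = Nat.card (orbit (Perm (Fin n))ᵈᵐᵃ w₀) *
        Nat.card (stabilizer (Perm (Fin n))ᵈᵐᵃ w₀) := by rw [hstab, ← horbit]; rfl
    _ = n.factorial := by
      rw [Nat.card_coe_set_eq, ← index_stabilizer, mul_comm, Subgroup.card_mul_index,
        Nat.card_congr DomMulAct.mk.symm, Nat.card_eq_fintype_card, Fintype.card_perm,
        Fintype.card_fin]

theorem sum_comp_eq_sum_card_fiber_mul {ι α : Type*} [Fintype ι] [Fintype α] (f : α → ℤ)
    (w : ι → α) : ∑ j, f (w j) = ∑ x, (Nat.card {j // w j = x} : ℤ) * f x := by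
  classical
  rw [← Fintype.sum_fiberwise w]
  refine Fintype.sum_congr _ _ fun x => ?_
  rw [Fintype.sum_congr _ (fun _ => f x) fun j => congrArg f j.2]
  simp [Nat.card_eq_fintype_card]

theorem card_lukasiewicz_words_with_counts_mul_prod_factorial {α : Type*} [Fintype α]
    (f : α → ℤ) (c : α → ℕ) {n : ℕ} (hc : ∑ x, c x = n) (hcf : ∑ x, (c x : ℤ) * f x = -1) :
    Nat.card {w : Fin n → α //
        (∀ x, Nat.card {j // w j = x} = c x) ∧ IsLukasiewicz fun j => f (w j)} *
      ∏ x, (c x).factorial = (n - 1).factorial := by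
  have hn : n ≠ 0 := by
    rintro rfl
    have hc0 : ∀ x, c x = 0 := by simpa using hc
    simp [hc0] at hcf
  have : NeZero n := ⟨hn⟩
  have hrot := card_isLukasiewicz_mul_eq_card f
    (fun w : Fin n → α => ∀ x, Nat.card {j // w j = x} = c x)
    (fun w r hw x => (Nat.card_congr ((Equiv.addRight r).subtypeEquiv
      (p := fun j => w (j + r) = x) fun _ => Iff.rfl)).trans (hw x))
    (fun w hw => by simpa [sum_comp_eq_sum_card_fiber_mul f w, hw] using hcf)
  have hmul := card_words_with_counts_mul_prod_factorial c hc
  rw [← hrot, ← Nat.mul_factorial_pred hn, mul_right_comm, mul_comm] at hmul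
  exact Nat.eq_of_mul_eq_mul_left (Nat.pos_of_ne_zero hn) hmul

theorem number_of_lukasiewicz_words_with_given_occurrences_general
    {α : Type*} [Fintype α] (k : ℕ) (a : Fin k → α) (ha : Function.Bijective a)
    (f : α → ℤ)
    (cnt : Fin k → ℕ) (n : ℕ) (hn : n = ∑ i, cnt i)
    (hvalid : ∑ i, (cnt i : ℤ) * f (a i) = -1) :
    Nat.card {w : Fin n → α //
        (∀ i : Fin k, Nat.card {j : Fin n // w j = a i} = cnt i) ∧
        (∑ j : Fin n, f (w j) = -1) ∧
        (∀ m : ℕ, 1 ≤ m → m < n →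
          0 ≤ ∑ j ∈ Finset.univ.filter (fun j : Fin n => (j : ℕ) < m), f (w j))} =
      (n - 1).factorial / ∏ i, (cnt i).factorial := by
  let e := Equiv.ofBijective a ha
  let c x := cnt (e.symm x)
  have hca (i : Fin k) : c (a i) = cnt i := congrArg cnt (e.symm_apply_apply i)
  have hcounts (w : Fin n → α) : (∀ i, Nat.card {j // w j = a i} = cnt i) ↔
      ∀ x, Nat.card {j // w j = x} = c x :=
    e.forall_congr_left.trans <| forall_congr' fun x => by
      rw [show a (e.symm x) = x from e.apply_symm_apply x]
  have hc : ∑ x, c x = n := by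
    rw [hn, ← e.sum_comp]; simp only [e, Equiv.ofBijective_apply, hca]
  have hcf : ∑ x, (c x : ℤ) * f x = -1 := by
    rw [← hvalid, ← e.sum_comp]; simp only [e, Equiv.ofBijective_apply, hca]
  have hL := card_lukasiewicz_words_with_counts_mul_prod_factorial f c hc hcf
  rw [← e.prod_comp] at hL
  simp only [e, Equiv.ofBijective_apply, hca] at hL
  refine (Nat.div_eq_of_eq_mul_left (by positivity) ?_).symm
  rw [← hL]
  congr 1
  exact Nat.card_congr (Equiv.subtypeEquivRight fun w => and_congr_left' (hcounts w)).symm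

/-- Let `α` be a finite alphabet with letters `a 1, …, a k` and `f : α → ℤ`
with `f ≥ -1`.  Let `cnt i` be natural numbers with `n = cnt 1 + ⋯ + cnt k ≥ 1` and
`∑ i, cnt i * f (a i) = -1`.  Then the number of `f`-Lukasiewicz words of length `n`
(words `w` with `∑_{j<m} f(w j) ≥ 0` for `1 ≤ m < n` and total sum `-1`) containing
exactly `cnt i` occurrences of `a i` for every `i` equals `(n-1)! / ((cnt 1)! ⋯ (cnt k)!)`. -/
theorem number_of_lukasiewicz_words_with_given_occurrences
    {α : Type*} [Fintype α] (k : ℕ) (a : Fin k → α) (ha : Function.Bijective a)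
    (f : α → ℤ) (hf : ∀ x : α, -1 ≤ f x)
    (cnt : Fin k → ℕ) (n : ℕ) (hn : n = ∑ i, cnt i) (hn1 : 1 ≤ n)
    (hvalid : ∑ i, (cnt i : ℤ) * f (a i) = -1) :
    Nat.card {w : Fin n → α //
        (∀ i : Fin k, Nat.card {j : Fin n // w j = a i} = cnt i) ∧
        (∑ j : Fin n, f (w j) = -1) ∧
        (∀ m : ℕ, 1 ≤ m → m < n →
          0 ≤ ∑ j ∈ Finset.univ.filter (fun j : Fin n => (j : ℕ) < m), f (w j))} =
      (n - 1).factorial / ∏ i, (cnt i).factorial :=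
  number_of_lukasiewicz_words_with_given_occurrences_general k a ha f cnt n hn hvalid
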